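/- Let α and β be finite nonempty types with decidable equality and let G be a simple graph on α × β with at least one edge whose graph Laplacian state ρ_G satisfies ρ_G (x,j) (y,l) = ρ_G (x,l) (y,j) for all x, y : α and j, l : β (i.e., ρ_G equals its partial transpose over the β factor). Then ρ_G is separable (as a state on ℂ^α ⊗ ℂ^β). -/

import Mathlib

open Matrix Kronecker ComplexOrder

noncomputable section

/-- A density matrix: positive semidefinite with trace 1. -/
def IsDensityMatrix {n : Type*} [Fintype n] (ρ : Matrix n n ℂ) : Prop :=
  ρ.PosSemidef ∧ ρ.trace = 1

/-- Separability of a bipartite density matrix: a convex combination of Kronecker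
products of density matrices of the subsystems. -/
def Separable {α β : Type*} [Fintype α] [Fintype β]
    (ρ : Matrix (α × β) (α × β) ℂ) : Prop :=
  ∃ (n : ℕ) (p : Fin n → ℝ) (σ : Fin n → Matrix α α ℂ) (τ : Fin n → Matrix β β ℂ),
    (∀ k, 0 ≤ p k) ∧ (∑ k, p k = 1) ∧
    (∀ k, (σ k).PosSemidef ∧ (σ k).trace = 1) ∧
    (∀ k, (τ k).PosSemidef ∧ (τ k).trace = 1) ∧
    ρ = ∑ k, (p k : ℂ) • (σ k ⊗ₖ τ k)

/-- The `(x,y)`-block of a bipartite matrix. -/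
def matBlock {α β : Type*} (ρ : Matrix (α × β) (α × β) ℂ) (x y : α) :
    Matrix β β ℂ :=
  Matrix.of fun j l => ρ (x, j) (y, l)

/-- The graph Laplacian quantum state of a simple graph. -/
def lapState {V : Type*} [Fintype V] [DecidableEq V] (G : SimpleGraph V)
    [DecidableRel G.Adj] : Matrix V V ℂ :=
  ((2 * G.edgeFinset.card : ℂ))⁻¹ • G.lapMatrix ℂ

/-! The Laplacian is a nonnegative combination of the rank-one edge matrices
`(e_a - e_b)(e_a - e_b)ᵀ`. Partial-transpose symmetry gives the edges `(x,j)–(y,l)` and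
`(x,l)–(y,j)` equal weights, and for such a pair the polarization identity
`2 (w₁w₁ᵀ + w₂w₂ᵀ) = (e_x + e_y)(e_x + e_y)ᵀ ⊗ (e_j - e_l)(e_j - e_l)ᵀ
  + (e_x - e_y)(e_x - e_y)ᵀ ⊗ (e_j + e_l)(e_j + e_l)ᵀ`
writes the pair as a sum of Kronecker products of positive semidefinite matrices.
Normalizing every factor to unit trace then yields a separable decomposition of the state. -/

/-- Unnormalized separable matrices. Closing under addition suffices: nonnegative scalars are
absorbed into a Kronecker factor (`smul_mem_separableCone`). -/
def separableCone (α β : Type*) [Fintype α] [Fintype β] :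
    AddSubmonoid (Matrix (α × β) (α × β) ℂ) :=
  AddSubmonoid.closure {M | ∃ A B, A.PosSemidef ∧ B.PosSemidef ∧ A ⊗ₖ B = M}

section SeparableCone

variable {α β : Type*} [Fintype α] [Fintype β]

lemma kronecker_mem_separableCone {A : Matrix α α ℂ} {B : Matrix β β ℂ}
    (hA : A.PosSemidef) (hB : B.PosSemidef) : A ⊗ₖ B ∈ separableCone α β :=
  AddSubmonoid.subset_closure ⟨A, B, hA, hB, rfl⟩

lemma smul_mem_separableCone {c : ℂ} (hc : 0 ≤ c) {M : Matrix (α × β) (α × β) ℂ}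
    (hM : M ∈ separableCone α β) : c • M ∈ separableCone α β := by
  induction hM using AddSubmonoid.closure_induction with
  | mem _ hM =>
    obtain ⟨A, B, hA, hB, rfl⟩ := hM
    rw [← smul_kronecker]
    exact kronecker_mem_separableCone (hA.smul hc) hB
  | zero => simp [(separableCone α β).zero_mem]
  | add _ _ _ _ hM hN => simpa [smul_add] using add_mem hM hN

lemma Matrix.PosSemidef.exists_eq_smul_isDensityMatrix {n : Type*} [Fintype n] [Nonempty n]
    {A : Matrix n n ℂ} (hA : A.PosSemidef) :
    ∃ (t : ℝ) (σ : Matrix n n ℂ), 0 ≤ t ∧ IsDensityMatrix σ ∧ A = (t : ℂ) • σ := by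
  classical
  have htr : A.trace = (A.trace.re : ℂ) :=
    Complex.eq_re_of_ofReal_le (by exact_mod_cast hA.trace_nonneg)
  by_cases h0 : A.trace = 0
  · have hcard : (Fintype.card n : ℂ) ≠ 0 := by simp
    refine ⟨0, (Fintype.card n : ℂ)⁻¹ • 1, le_rfl, ⟨PosSemidef.one.smul (by positivity), ?_⟩, ?_⟩
    · simp [trace_smul, hcard]
    · simp [hA.trace_eq_zero_iff.1 h0]
  · refine ⟨A.trace.re, A.trace⁻¹ • A, Complex.zero_le_real.1 (htr ▸ hA.trace_nonneg),
      ⟨hA.smul (inv_nonneg.2 hA.trace_nonneg), by simp [trace_smul, h0]⟩, ?_⟩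
    rw [← htr, smul_smul, mul_inv_cancel₀ h0, one_smul]

theorem separable_of_mem_separableCone [Nonempty α] [Nonempty β]
    {ρ : Matrix (α × β) (α × β) ℂ} (hρ : ρ ∈ separableCone α β) (htr : ρ.trace = 1) :
    Separable ρ := by
  obtain ⟨l, hl, rfl⟩ := AddSubmonoid.exists_list_of_mem_closure hρ
  have hterm (k : Fin l.length) : ∃ (p : ℝ) (σ : Matrix α α ℂ) (τ : Matrix β β ℂ),
      0 ≤ p ∧ IsDensityMatrix σ ∧ IsDensityMatrix τ ∧ l.get k = (p : ℂ) • (σ ⊗ₖ τ) := by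
    obtain ⟨A, B, hA, hB, hAB⟩ := hl _ (l.get_mem k)
    obtain ⟨s, σ, hs, hσ, rfl⟩ := hA.exists_eq_smul_isDensityMatrix
    obtain ⟨t, τ, ht, hτ, rfl⟩ := hB.exists_eq_smul_isDensityMatrix
    refine ⟨s * t, σ, τ, mul_nonneg hs ht, hσ, hτ, ?_⟩
    rw [← hAB, smul_kronecker, kronecker_smul, smul_smul, Complex.ofReal_mul]
  choose p σ τ hp hσ hτ hl using hterm
  have hsum : l.sum = ∑ k, (p k : ℂ) • (σ k ⊗ₖ τ k) := by
    rw [← Fin.sum_univ_getElem]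
    exact Finset.sum_congr rfl fun k _ ↦ hl k
  refine ⟨l.length, p, σ, τ, hp, ?_, hσ, hτ, hsum⟩
  rw [hsum] at htr
  simp only [trace_sum, trace_smul, trace_kronecker, (hσ _).2, (hτ _).2, smul_eq_mul,
    mul_one] at htr
  exact_mod_cast htr

end SeparableCone

lemma Matrix.posSemidef_vecMulVec_self {n R : Type*} [Fintype n] [CommRing R] [PartialOrder R]
    [StarRing R] [StarOrderedRing R] {v : n → R} (hv : star v = v) :
    (vecMulVec v v).PosSemidef := by
  simpa [hv] using posSemidef_vecMulVec_self_star v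

section EdgeLaplacian

variable {ι : Type*} [DecidableEq ι] (R : Type*) [CommRing R]

def edgeLaplacian (a b : ι) : Matrix ι ι R :=
  vecMulVec (Pi.single a 1 - Pi.single b 1) (Pi.single a 1 - Pi.single b 1)

lemma edgeLaplacian_eq_single (a b : ι) :
    edgeLaplacian R a b = single a a 1 - single a b 1 - single b a 1 + single b b 1 := by
  simp only [edgeLaplacian, sub_vecMulVec, vecMulVec_sub, ← single_eq_single_vecMulVec_single]
  abel

variable {R}

lemma Matrix.IsSymm.two_smul_eq_sum_smul_edgeLaplacian [Fintype ι] {M : Matrix ι ι R}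
    (hM : M.IsSymm) (hrow : M *ᵥ (fun _ ↦ 1) = 0) :
    (2 : R) • M = ∑ p : ι × ι, (-M p.1 p.2) • edgeLaplacian R p.1 p.2 := by
  have hrows (a : ι) : ∑ b, M a b = 0 := by simpa [mulVec, dotProduct] using congrFun hrow a
  have hcols (b : ι) : ∑ a, M a b = 0 := by simpa [← hM.apply b] using hrows b
  simp only [Fintype.sum_prod_type, edgeLaplacian_eq_single, smul_add, smul_sub, smul_single,
    smul_eq_mul, mul_one, Finset.sum_add_distrib, Finset.sum_sub_distrib]
  ext c d
  simp [sum_apply, single_apply, ite_and, Finset.sum_ite_eq', hcols, hrows, hM.apply d c]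
  ring

end EdgeLaplacian

section Polarization

variable {α β R : Type*} [CommRing R]

lemma Matrix.kronecker_vecMulVec_polarization (u₁ u₂ : α → R) (v₁ v₂ : β → R) :
    vecMulVec (u₁ + u₂) (u₁ + u₂) ⊗ₖ vecMulVec (v₁ - v₂) (v₁ - v₂) +
        vecMulVec (u₁ - u₂) (u₁ - u₂) ⊗ₖ vecMulVec (v₁ + v₂) (v₁ + v₂) =
      (2 : R) • (vecMulVec (fun p ↦ u₁ p.1 * v₁ p.2 - u₂ p.1 * v₂ p.2)
          (fun p ↦ u₁ p.1 * v₁ p.2 - u₂ p.1 * v₂ p.2) +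
        vecMulVec (fun p ↦ u₁ p.1 * v₂ p.2 - u₂ p.1 * v₁ p.2)
          (fun p ↦ u₁ p.1 * v₂ p.2 - u₂ p.1 * v₁ p.2)) := by
  ext ⟨a, m⟩ ⟨b, n⟩
  simp only [add_apply, smul_apply, kroneckerMap_apply, vecMulVec_apply, Pi.add_apply,
    Pi.sub_apply, smul_eq_mul]
  ring

variable [DecidableEq α] [DecidableEq β]

lemma Pi.single_one_mul_single_one (x : α) (j : β) (p : α × β) :
    (Pi.single x 1 : α → R) p.1 * (Pi.single j 1 : β → R) p.2 =
      (Pi.single (x, j) 1 : α × β → R) p := by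
  obtain ⟨a, m⟩ := p
  by_cases ha : a = x <;> by_cases hm : m = j <;> simp [ha, hm]

lemma two_smul_edgeLaplacian_add_edgeLaplacian (x y : α) (j l : β) :
    (2 : R) • (edgeLaplacian R (x, j) (y, l) + edgeLaplacian R (x, l) (y, j)) =
      vecMulVec (Pi.single x 1 + Pi.single y 1) (Pi.single x 1 + Pi.single y 1) ⊗ₖ
          vecMulVec (Pi.single j 1 - Pi.single l 1) (Pi.single j 1 - Pi.single l 1) +
        vecMulVec (Pi.single x 1 - Pi.single y 1) (Pi.single x 1 - Pi.single y 1) ⊗ₖ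
          vecMulVec (Pi.single j 1 + Pi.single l 1) (Pi.single j 1 + Pi.single l 1) := by
  rw [kronecker_vecMulVec_polarization]
  simp only [edgeLaplacian, Pi.single_one_mul_single_one]
  rfl

end Polarization

theorem mem_separableCone_of_partialTranspose_eq {α β : Type*} [Fintype α] [Fintype β]
    [DecidableEq α] [DecidableEq β] {M : Matrix (α × β) (α × β) ℂ} (hM : M.IsSymm)
    (hrow : M *ᵥ (fun _ ↦ 1) = 0) (hoff : ∀ a b, a ≠ b → M a b ≤ 0)
    (hpt : ∀ x y j l, M (x, j) (y, l) = M (x, l) (y, j)) :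
    M ∈ separableCone α β := by
  let swap : Equiv.Perm ((α × β) × (α × β)) :=
    Function.Involutive.toPerm (fun p : (α × β) × (α × β) ↦ ((p.1.1, p.2.2), (p.2.1, p.1.2)))
      fun _ ↦ rfl
  have hpaired : (4 : ℂ) • M = ∑ p, (-M p.1 p.2) •
      (edgeLaplacian ℂ p.1 p.2 + edgeLaplacian ℂ (swap p).1 (swap p).2) := by
    have h2 := hM.two_smul_eq_sum_smul_edgeLaplacian hrow
    have hswap : ∑ p : (α × β) × (α × β), (-M p.1 p.2) • edgeLaplacian ℂ p.1 p.2 =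
        ∑ p, (-M (swap p).1 (swap p).2) • edgeLaplacian ℂ (swap p).1 (swap p).2 :=
      (Equiv.sum_comp swap fun p ↦ (-M p.1 p.2) • edgeLaplacian ℂ p.1 p.2).symm
    calc (4 : ℂ) • M = (2 : ℂ) • M + (2 : ℂ) • M := by rw [← add_smul]; norm_num
      _ = ∑ p : (α × β) × (α × β), (-M p.1 p.2) • edgeLaplacian ℂ p.1 p.2 +
          ∑ p, (-M (swap p).1 (swap p).2) • edgeLaplacian ℂ (swap p).1 (swap p).2 := by
        rw [← hswap, ← h2]
      _ = _ := by
        rw [← Finset.sum_add_distrib]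
        refine Finset.sum_congr rfl fun p _ ↦ ?_
        rw [smul_add, show M (swap p).1 (swap p).2 = M p.1 p.2 from (hpt ..).symm]
  have hterm (x y : α) (j l : β) : (-M (x, j) (y, l)) • (2 : ℂ) •
      (edgeLaplacian ℂ (x, j) (y, l) + edgeLaplacian ℂ (x, l) (y, j)) ∈ separableCone α β := by
    rw [two_smul_edgeLaplacian_add_edgeLaplacian]
    by_cases h : (x, j) = (y, l)
    · obtain ⟨rfl, rfl⟩ := Prod.mk.inj h
      simp [(separableCone α β).zero_mem]
    · refine smul_mem_separableCone (neg_nonneg.2 (hoff _ _ h)) (add_mem ?_ ?_) <;>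
        exact kronecker_mem_separableCone (posSemidef_vecMulVec_self (by simp))
          (posSemidef_vecMulVec_self (by simp))
  have hmem : (8 : ℂ) • M ∈ separableCone α β := by
    rw [show (8 : ℂ) = 2 * 4 by norm_num, mul_smul, hpaired, Finset.smul_sum]
    refine sum_mem fun ⟨⟨x, j⟩, ⟨y, l⟩⟩ _ ↦ ?_
    rw [smul_comm]
    exact hterm x y j l
  simpa [smul_smul] using smul_mem_separableCone (c := 8⁻¹) (by positivity) hmem

namespace SimpleGraph

variable {V : Type*} [Fintype V] [DecidableEq V] (G : SimpleGraph V) [DecidableRel G.Adj]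

theorem trace_lapMatrix (R : Type*) [Ring R] :
    (G.lapMatrix R).trace = 2 * G.edgeFinset.card := by
  rw [lapMatrix, trace_sub, trace_adjMatrix, degMatrix, trace_diagonal, sub_zero,
    ← Nat.cast_sum, sum_degrees_eq_twice_card_edges]
  push_cast; rfl

theorem lapMatrix_apply_of_ne (R : Type*) [Ring R] {a b : V} (hab : a ≠ b) :
    G.lapMatrix R a b = -G.adjMatrix R a b := by
  simp [lapMatrix, degMatrix, hab]

end SimpleGraph

section LapState

variable {V : Type*} [Fintype V] [DecidableEq V] (G : SimpleGraph V) [DecidableRel G.Adj]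

lemma isSymm_lapState : (lapState G).IsSymm :=
  (G.isSymm_lapMatrix ℂ).smul _

lemma lapState_mulVec_const_eq_zero : lapState G *ᵥ (fun _ ↦ 1) = 0 := by
  rw [lapState, smul_mulVec, G.lapMatrix_mulVec_const_eq_zero, smul_zero]

lemma lapState_apply_nonpos {a b : V} (hab : a ≠ b) : lapState G a b ≤ 0 := by
  rw [lapState, Matrix.smul_apply, G.lapMatrix_apply_of_ne ℂ hab, SimpleGraph.adjMatrix_apply,
    smul_eq_mul, mul_neg, neg_nonpos]
  split_ifs <;> positivity

lemma trace_lapState (hE : G.edgeFinset.Nonempty) : (lapState G).trace = 1 := by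
  rw [lapState, trace_smul, G.trace_lapMatrix, smul_eq_mul, inv_mul_cancel₀]
  exact_mod_cast (mul_pos two_pos hE.card_pos).ne'

end LapState

theorem partial_transpose_symmetric_state_separable
    {α β : Type*} [Fintype α] [Fintype β] [Nonempty α] [Nonempty β]
    [DecidableEq α] [DecidableEq β]
    (G : SimpleGraph (α × β)) [DecidableRel G.Adj]
    (hE : G.edgeFinset.Nonempty)
    (hsym : ∀ (x y : α) (j l : β),
      lapState G (x, j) (y, l) = lapState G (x, l) (y, j)) :
    Separable (lapState G) :=
  separable_of_mem_separableCone
    (mem_separableCone_of_partialTranspose_eq (isSymm_lapState G)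
      (lapState_mulVec_const_eq_zero G) (fun _ _ ↦ lapState_apply_nonpos G) hsym)
    (trace_lapState G hE)
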